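/- arXiv:1805.04180 — 6 statements merged into one kernel-verified Lean document; each statement's English description precedes it below -/
import Mathlib

section
/- Every graph G with minimum degree δ contains a matching of size at least min(δ, ⌊|V(G)|/2⌋). -/
/-!
Take a matching `M` covering as many vertices as possible and suppose it has fewer than
`min δ ⌊n/2⌋` edges. Then at least two vertices `u ≠ v` are uncovered. Maximality forces all
neighbours of `u` and of `v` to be covered, and it also forbids an edge from `v` to the partner
of a neighbour of `u`, since `u x y v` would be an augmenting path. So the partners of the
neighbours of `u` and the neighbours of `v` are disjoint sets of covered vertices, whence
`2δ ≤ deg u + deg v ≤ |V(M)| = 2|E(M)| < 2δ`.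
-/

open SimpleGraph

namespace SimpleGraph

variable {V : Type*} {G : SimpleGraph V}

theorem ncard_neighborSet_eq_degree (G : SimpleGraph V) (v : V) [Fintype (G.neighborSet v)] :
    (G.neighborSet v).ncard = G.degree v := by
  rw [Set.ncard_eq_toFinset_card', Set.toFinset_card, card_neighborSet_eq_degree]

namespace Subgraph

variable {M : G.Subgraph}

theorem IsMatching.ncard_verts_eq_two_mul [Finite V] (hM : M.IsMatching) :
    M.verts.ncard = 2 * M.edgeSet.ncard := by
  classical
  cases nonempty_fintype V
  have hdeg (v : V) : M.spanningCoe.degree v = if v ∈ M.verts then 1 else 0 := by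
    rw [degree_spanningCoe]
    split_ifs with hv
    · exact isMatching_iff_forall_degree.mp hM v hv
    · exact degree_of_notMem_verts hv
  have hsum := M.spanningCoe.sum_degrees_eq_twice_card_edges
  simp only [hdeg, Finset.sum_boole, Nat.cast_id] at hsum
  rw [Set.ncard_eq_toFinset_card', ← edgeSet_spanningCoe, ← coe_edgeFinset, Set.ncard_coe_finset,
    ← hsum]
  congr 1
  ext
  simp

theorem IsMatching.deleteVerts_of_adj {x y : V} (hM : M.IsMatching) (hxy : M.Adj x y) :
    (M.deleteVerts {x, y}).IsMatching := by
  rintro z ⟨hz, hzxy⟩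
  obtain ⟨w, hzw, hw⟩ := hM hz
  refine ⟨w, ?_, fun w' hw' => hw w' (deleteVerts_adj.mp hw').2.2.2.2⟩
  have hwxy : w ∉ ({x, y} : Set V) := by
    rintro (rfl | rfl)
    · exact hzxy (.inr (hM.eq_of_adj_right hzw hxy.symm))
    · exact hzxy (.inl (hM.eq_of_adj_right hzw hxy))
  exact deleteVerts_adj.mpr ⟨hz, hzxy, hzw.snd_mem, hwxy, hzw⟩

theorem IsMatching.sup_subgraphOfAdj {u v : V} (hM : M.IsMatching) (huv : G.Adj u v)
    (hu : u ∉ M.verts) (hv : v ∉ M.verts) : (M ⊔ G.subgraphOfAdj huv).IsMatching := by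
  refine hM.sup (.subgraphOfAdj huv) ?_
  rw [hM.support_eq_verts, support_subgraphOfAdj, Set.disjoint_insert_right,
    Set.disjoint_singleton_right]
  exact ⟨hu, hv⟩

theorem IsMatching.exists_verts_eq_insert_insert {u v : V} (hM : M.IsMatching)
    (huv : G.Adj u v) (hu : u ∉ M.verts) (hv : v ∉ M.verts) :
    ∃ M' : G.Subgraph, M'.IsMatching ∧ M'.verts = insert u (insert v M.verts) :=
  ⟨_, hM.sup_subgraphOfAdj huv hu hv, by ext; simp⟩

theorem IsMatching.exists_verts_eq_insert_insert_of_augmenting {u v x y : V}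
    (hM : M.IsMatching) (hxy : M.Adj x y) (hux : G.Adj u x) (hvy : G.Adj v y)
    (hu : u ∉ M.verts) (hv : v ∉ M.verts) (huv : u ≠ v) :
    ∃ M' : G.Subgraph, M'.IsMatching ∧ M'.verts = insert u (insert v M.verts) := by
  have hx := hxy.fst_mem
  have hy := hxy.snd_mem
  have huy : u ≠ y := by rintro rfl; exact hu hy
  have hvx : v ≠ x := by rintro rfl; exact hv hx
  have hM₁ := (hM.deleteVerts_of_adj hxy).sup_subgraphOfAdj hux (by simp [hu]) (by simp)
  have hM₂ := hM₁.sup_subgraphOfAdj hvy (by simp [hv, huv.symm, hvx])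
    (by simp [huy.symm, hxy.ne.symm])
  refine ⟨_, hM₂, ?_⟩
  ext z
  simp only [verts_sup, deleteVerts_verts, subgraphOfAdj_verts, Set.mem_union, Set.mem_sdiff,
    Set.mem_insert_iff, Set.mem_singleton_iff]
  grind

theorem IsMatching.degree_add_degree_le_ncard_verts [Fintype V] [DecidableRel G.Adj]
    (hM : M.IsMatching)
    (hmax : ∀ M' : G.Subgraph, M'.IsMatching → M'.verts.ncard ≤ M.verts.ncard)
    {u v : V} (hu : u ∉ M.verts) (hv : v ∉ M.verts) (huv : u ≠ v) :
    G.degree u + G.degree v ≤ M.verts.ncard := by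
  have not_grow {a b : V} (ha : a ∉ M.verts) (hb : b ∉ M.verts) (hab : a ≠ b)
      (M' : G.Subgraph) (hM' : M'.IsMatching) : M'.verts ≠ insert a (insert b M.verts) := by
    intro hM'v
    have := hmax M' hM'
    rw [hM'v, Set.ncard_insert_of_notMem (by simp [hab, ha]), Set.ncard_insert_of_notMem hb] at this
    omega
  have neighborSet_subset {w : V} (hw : w ∉ M.verts) : G.neighborSet w ⊆ M.verts := by
    intro x hwx
    by_contra hx
    obtain ⟨M', hM', hM'v⟩ := hM.exists_verts_eq_insert_insert hwx hw hx
    exact not_grow hw hx hwx.ne M' hM' hM'v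
  choose! partner hpartner using fun x (hx : x ∈ M.verts) => (hM hx).exists
  have partner_injOn : Set.InjOn partner M.verts := fun x hx x' hx' h =>
    hM.eq_of_adj_right (hpartner x hx) (h ▸ hpartner x' hx')
  have hdisj : Disjoint (partner '' G.neighborSet u) (G.neighborSet v) := by
    rw [Set.disjoint_left]
    rintro _ ⟨x, hux, rfl⟩ hvx
    obtain ⟨M', hM', hM'v⟩ := hM.exists_verts_eq_insert_insert_of_augmenting
      (hpartner x (neighborSet_subset hu hux)) hux hvx hu hv huv
    exact not_grow hu hv huv M' hM' hM'v
  have hsub : partner '' G.neighborSet u ∪ G.neighborSet v ⊆ M.verts := by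
    rintro _ (⟨x, hux, rfl⟩ | hvx)
    · exact (hpartner x (neighborSet_subset hu hux)).snd_mem
    · exact neighborSet_subset hv hvx
  calc G.degree u + G.degree v
      = (partner '' G.neighborSet u).ncard + (G.neighborSet v).ncard := by
        rw [(partner_injOn.mono (neighborSet_subset hu)).ncard_image,
          ncard_neighborSet_eq_degree, ncard_neighborSet_eq_degree]
    _ = (partner '' G.neighborSet u ∪ G.neighborSet v).ncard := (Set.ncard_union_eq hdisj).symm
    _ ≤ M.verts.ncard := Set.ncard_le_ncard hsub

end Subgraph

end SimpleGraph

theorem matching_of_minDegree_general {V : Type*} [Fintype V]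
    (G : SimpleGraph V) [DecidableRel G.Adj] (δ : ℕ)
    (hδ : ∀ v : V, δ ≤ G.degree v) :
    ∃ M : G.Subgraph, M.IsMatching ∧
      min δ (Fintype.card V / 2) ≤ M.edgeSet.ncard := by
  obtain ⟨M, hM, hmax⟩ := Set.exists_max_image {M : G.Subgraph | M.IsMatching}
    (fun M => M.verts.ncard) (Set.toFinite _) ⟨⊥, fun _ hv => hv.elim⟩
  refine ⟨M, hM, ?_⟩
  by_contra! hsmall
  have hverts := hM.ncard_verts_eq_two_mul
  have hcompl := Set.ncard_add_ncard_compl M.verts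
  rw [Nat.card_eq_fintype_card] at hcompl
  obtain ⟨u, v, hu, hv, huv⟩ := (Set.one_lt_ncard_iff).mp (show 1 < M.vertsᶜ.ncard by omega)
  have hdeg := hM.degree_add_degree_le_ncard_verts hmax hu hv huv
  have := hδ u
  have := hδ v
  omega

/-- Every graph with minimum degree `δ` contains a matching
of size at least `min δ ⌊|V(G)|/2⌋`. -/
theorem matching_of_minDegree {V : Type*} [Fintype V] [DecidableEq V]
    (G : SimpleGraph V) [DecidableRel G.Adj] (δ : ℕ)
    (hδ : ∀ v : V, δ ≤ G.degree v) :
    ∃ M : G.Subgraph, M.IsMatching ∧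
      min δ (Fintype.card V / 2) ≤ M.edgeSet.ncard :=
  matching_of_minDegree_general G δ hδ
end

section
/- Let G be a properly edge-colored graph with no rainbow path of length k+1 and P* = v_0…v_k a rainbow path with colors c_i = c(v_{i-1}v_i). Suppose w ∉ {v_0,…,v_k}, v_0 w ∈ E(G), and for some 0 ≤ j ≤ k-2 the edge v_k v_j exists with c(v_k v_j) ∉ {c_1,…,c_k}. Then c(v_0 w) ≠ c(v_j v_{j+1}). -/
open SimpleGraph

/-!
Rotate the rainbow path `v₀ … vₖ` along the edge `vₖ vⱼ` (a Pósa rotation) into the path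
`v₀ … vⱼ vₖ vₖ₋₁ … vⱼ₊₁`: it uses the same edges except that `vⱼ vⱼ₊₁` is traded for `vₖ vⱼ`.
If `c(v₀ w) = c(vⱼ vⱼ₊₁)`, prefixing `w` restores the colour of the dropped edge, and since the
colour of `vₖ vⱼ` is new, `w v₀ … vⱼ vₖ … vⱼ₊₁` is a rainbow path of length `k + 1`.
-/

/-- A proper edge-coloring: edges sharing a vertex receive distinct colors. -/
def ProperEdgeColoring {V : Type*} (G : SimpleGraph V) (c : Sym2 V → ℕ) : Prop :=
  ∀ ⦃u v w : V⦄, G.Adj u v → G.Adj u w → v ≠ w → c s(u, v) ≠ c s(u, w)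

namespace SimpleGraph.Walk

variable {V : Type*} {G : SimpleGraph V} {u v : V}

lemma lt_length_of_adj_getVert {p : G.Walk u v} {j : ℕ} (h : G.Adj v (p.getVert j)) :
    j < p.length := by
  by_contra! hj
  exact G.irrefl (p.getVert_of_length_le hj ▸ h)

lemma edges_eq_take_append_cons_drop (p : G.Walk u v) {j : ℕ} (hj : j < p.length) :
    p.edges =
      (p.take j).edges ++ s(p.getVert j, p.getVert (j + 1)) :: (p.drop (j + 1)).edges := by
  rw [edges_take, edges_drop, ← getElem_edges (by simpa using hj), List.getElem_cons_drop,
    List.take_append_drop]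

lemma support_eq_take_append_drop (p : G.Walk u v) {j : ℕ} (hj : j < p.length) :
    p.support = (p.take j).support ++ (p.drop (j + 1)).support := by
  rw [support_take, drop_support_eq_support_drop_min, min_eq_left hj, List.take_append_drop]

def posaRotation (p : G.Walk u v) (j : ℕ) (h : G.Adj v (p.getVert j)) :
    G.Walk u (p.getVert (j + 1)) :=
  (p.take j).append (cons h.symm (p.drop (j + 1)).reverse)

variable {p : G.Walk u v} {j : ℕ}

lemma length_posaRotation (h : G.Adj v (p.getVert j)) :
    (p.posaRotation j h).length = p.length := by
  have := lt_length_of_adj_getVert h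
  simp only [posaRotation, length_append, take_length, length_cons, length_reverse, drop_length]
  omega

lemma support_posaRotation_perm (h : G.Adj v (p.getVert j)) :
    (p.posaRotation j h).support.Perm p.support := by
  rw [support_eq_take_append_drop p (lt_length_of_adj_getVert h)]
  simp only [posaRotation, support_append, support_cons, support_reverse, List.tail_cons]
  exact (List.reverse_perm _).append_left _

lemma edges_posaRotation_perm (h : G.Adj v (p.getVert j)) :
    (s(p.getVert j, p.getVert (j + 1)) :: (p.posaRotation j h).edges).Perm
      (s(v, p.getVert j) :: p.edges) := by
  rw [edges_eq_take_append_cons_drop p (lt_length_of_adj_getVert h)]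
  simp only [posaRotation, edges_append, edges_cons, edges_reverse, Sym2.eq_swap (a := v)]
  exact List.perm_middle.cons _ |>.trans (.swap _ _ _) |>.trans
    ((List.reverse_perm _).append_left _ |>.cons _ |>.trans List.perm_middle.symm |>.cons _)

lemma IsPath.posaRotation (hp : p.IsPath) (h : G.Adj v (p.getVert j)) :
    (p.posaRotation j h).IsPath := by
  rw [isPath_def, (support_posaRotation_perm h).nodup_iff]
  exact hp.support_nodup

end SimpleGraph.Walk

theorem Lout_inter_SR_empty_general {V : Type*}
    (G : SimpleGraph V) (c : Sym2 V → ℕ) (k : ℕ)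
    (hno : ∀ (x y : V) (q : G.Walk x y), q.IsPath → q.length = k + 1 →
      ¬ (q.edges.map c).Nodup)
    (v₀ vₖ : V) (p : G.Walk v₀ vₖ) (hp : p.IsPath) (hlen : p.length = k)
    (hrb : (p.edges.map c).Nodup)
    (w : V) (hw : w ∉ p.support) (hadj : G.Adj v₀ w)
    (j : ℕ) (hadj' : G.Adj vₖ (p.getVert j))
    (hnew : c s(vₖ, p.getVert j) ∉ p.edges.map c) :
    c s(v₀, w) ≠ c s(p.getVert j, p.getVert (j + 1)) := by
  intro hcolor
  let q := Walk.cons hadj.symm (p.posaRotation j hadj')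
  have hq : q.IsPath :=
    (hp.posaRotation hadj').cons (by rwa [(Walk.support_posaRotation_perm hadj').mem_iff])
  refine hno w _ q hq (by simp [q, Walk.length_posaRotation, hlen]) ?_
  have hperm := (Walk.edges_posaRotation_perm hadj').map c
  rw [List.map_cons, ← hcolor, List.map_cons] at hperm
  rw [Walk.edges_cons, List.map_cons, Sym2.eq_swap, hperm.nodup_iff]
  exact List.nodup_cons.2 ⟨hnew, hrb⟩

/-- Claim 1: `L_out ∩ S_R = ∅`. Let `G` be properly
edge-colored with no rainbow path of length `k+1` and `p = v_0 … v_k` a rainbow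
path. If `w ∉ {v_0,…,v_k}`, `v_0 w ∈ E(G)`, and for some `0 ≤ j ≤ k-2` the edge
`v_k v_j` exists and has a color outside `{c_1,…,c_k}`, then
`c(v_0 w) ≠ c(v_j v_{j+1})`. -/
theorem Lout_inter_SR_empty {V : Type*} [DecidableEq V]
    (G : SimpleGraph V) (c : Sym2 V → ℕ) (k : ℕ)
    (hproper : ProperEdgeColoring G c)
    (hno : ∀ (x y : V) (q : G.Walk x y), q.IsPath → q.length = k + 1 →
      ¬ (q.edges.map c).Nodup)
    (v₀ vₖ : V) (p : G.Walk v₀ vₖ) (hp : p.IsPath) (hlen : p.length = k)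
    (hrb : (p.edges.map c).Nodup)
    (w : V) (hw : w ∉ p.support) (hadj : G.Adj v₀ w)
    (j : ℕ) (hj : j ≤ k - 2) (hadj' : G.Adj vₖ (p.getVert j))
    (hnew : c s(vₖ, p.getVert j) ∉ p.edges.map c) :
    c s(v₀, w) ≠ c s(p.getVert j, p.getVert (j + 1)) :=
  Lout_inter_SR_empty_general G c k hno v₀ vₖ p hp hlen hrb w hw hadj j hadj' hnew
end

section
/- Let G be a properly edge-colored graph with no rainbow path of length k+1 and P* = v_0…v_k a rainbow path of length k with colors c_i. If v_0 v_i ∈ E(G) for some 2 ≤ i ≤ k and c(v_0 v_i) ∉ {c_1,…,c_k}, then v_{i-1} is the terminal vertex of some rainbow path of length k on the vertex set {v_0,…,v_k}; explicitly, v_{i-1} v_{i-2} … v_0 v_i v_{i+1} … v_k is a rainbow path. -/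
open SimpleGraph

/-! The new path is obtained from `v₀ … v_k` by a Pósa rotation: reverse the initial segment
`v₀ … v_{i-1}` and reattach it to `v_i … v_k` through the chord `v₀ v_i`. This permutes the
vertices, so the result is again a path on the same vertex set, and it trades the color of
`v_{i-1} v_i` for the new color `c(v₀ v_i)`, so it stays rainbow. -/

theorem List.Nodup.reverse_take_append_cons_drop {α : Type*} {l : List α} (hl : l.Nodup)
    {b : α} (hb : b ∉ l) (n : ℕ) : ((l.take n).reverse ++ b :: l.drop (n + 1)).Nodup := by
  have hperm : ((l.take n).reverse ++ b :: l.drop (n + 1)).Perm (b :: l.eraseIdx n) := by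
    rw [List.eraseIdx_eq_take_drop_succ]
    exact List.perm_middle.trans (((l.take n).reverse_perm.append_right _).cons b)
  rw [hperm.nodup_iff, List.nodup_cons]
  exact ⟨fun hb' => hb ((l.eraseIdx_sublist n).subset hb'), hl.eraseIdx n⟩

namespace SimpleGraph.Walk

variable {V : Type*} {G : SimpleGraph V} {u v : V}

def posaRotate (p : G.Walk u v) (n : ℕ) (h : G.Adj u (p.getVert (n + 1))) :
    G.Walk (p.getVert n) v :=
  (p.take n).reverse.append (cons h (p.drop (n + 1)))

variable (p : G.Walk u v) {n : ℕ} (h : G.Adj u (p.getVert (n + 1)))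

theorem support_posaRotate_perm (hn : n < p.length) :
    (p.posaRotate n h).support.Perm p.support := by
  have hmin : (n + 1) ⊓ p.length = n + 1 := min_eq_left hn
  rw [posaRotate, support_append, support_reverse, support_cons, List.tail_cons,
    support_take, drop_support_eq_support_drop_min, hmin]
  conv_rhs => rw [← p.support.take_append_drop (n + 1)]
  exact (p.support.take (n + 1)).reverse_perm.append_right _

theorem length_posaRotate (hn : n < p.length) : (p.posaRotate n h).length = p.length := by
  simp only [posaRotate, length_append, length_reverse, take_length, length_cons, drop_length]
  omega

theorem edges_posaRotate :
    (p.posaRotate n h).edges =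
      (p.edges.take n).reverse ++ s(u, p.getVert (n + 1)) :: p.edges.drop (n + 1) := by
  rw [posaRotate, edges_append, edges_reverse, edges_cons, edges_take, edges_drop]

theorem IsPath.posaRotate (hp : p.IsPath) (hn : n < p.length) : (p.posaRotate n h).IsPath :=
  (isPath_def _).mpr <| (p.support_posaRotate_perm h hn).nodup_iff.mpr hp.support_nodup

theorem nodup_map_edges_posaRotate {α : Type*} {c : Sym2 V → α} (hrb : (p.edges.map c).Nodup)
    (hnew : c s(u, p.getVert (n + 1)) ∉ p.edges.map c) :
    ((p.posaRotate n h).edges.map c).Nodup := by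
  rw [edges_posaRotate, List.map_append, List.map_reverse, List.map_cons, List.map_take,
    List.map_drop]
  exact hrb.reverse_take_append_cons_drop hnew n

end SimpleGraph.Walk

theorem new_edge_terminal_general {V : Type*} [DecidableEq V]
    (G : SimpleGraph V) (c : Sym2 V → ℕ) (k : ℕ)
    (v₀ vₖ : V) (p : G.Walk v₀ vₖ) (hp : p.IsPath) (hlen : p.length = k)
    (hrb : (p.edges.map c).Nodup)
    (i : ℕ) (hi₂ : 2 ≤ i) (hik : i ≤ k)
    (hadj : G.Adj v₀ (p.getVert i))
    (hnew : c s(v₀, p.getVert i) ∉ p.edges.map c) :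
    ∃ q : G.Walk (p.getVert (i - 1)) vₖ,
      q.IsPath ∧ q.length = k ∧ q.support.toFinset = p.support.toFinset ∧
      (q.edges.map c).Nodup := by
  obtain ⟨n, rfl⟩ : ∃ n, i = n + 1 := ⟨i - 1, by omega⟩
  have hn : n < p.length := by omega
  rw [Nat.add_sub_cancel]
  exact ⟨p.posaRotate n hadj, hp.posaRotate p hadj hn, hlen ▸ p.length_posaRotate hadj hn,
    List.toFinset_eq_of_perm _ _ (p.support_posaRotate_perm hadj hn),
    p.nodup_map_edges_posaRotate hadj hrb hnew⟩

/-- Claim `new_edge`. If `p = v_0 … v_k` is a rainbow path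
in a properly edge-colored graph, `v_0 v_i ∈ E(G)` for some `2 ≤ i ≤ k`, and
`c(v_0 v_i)` is not a color of `p`, then `v_{i-1}` is a terminal vertex of a
rainbow path of length `k` on the vertex set `{v_0,…,v_k}` (namely
`v_{i-1} v_{i-2} … v_0 v_i v_{i+1} … v_k`). -/
theorem new_edge_terminal {V : Type*} [DecidableEq V]
    (G : SimpleGraph V) (c : Sym2 V → ℕ) (k : ℕ)
    (hproper : ProperEdgeColoring G c)
    (v₀ vₖ : V) (p : G.Walk v₀ vₖ) (hp : p.IsPath) (hlen : p.length = k)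
    (hrb : (p.edges.map c).Nodup)
    (i : ℕ) (hi₂ : 2 ≤ i) (hik : i ≤ k)
    (hadj : G.Adj v₀ (p.getVert i))
    (hnew : c s(v₀, p.getVert i) ∉ p.edges.map c) :
    ∃ q : G.Walk (p.getVert (i - 1)) vₖ,
      q.IsPath ∧ q.length = k ∧ q.support.toFinset = p.support.toFinset ∧
      (q.edges.map c).Nodup :=
  new_edge_terminal_general G c k v₀ vₖ p hp hlen hrb i hi₂ hik hadj hnew
end

section
/- Let P* = v_0…v_k be a rainbow path in a properly edge-colored graph with colors c_i = c(v_{i-1}v_i). Suppose v_0 v_i ∈ E(G) with c(v_0 v_i) = c_j for some j with i ≤ j ≤ k-2, and v_k v_j ∈ E(G) with c(v_k v_j) ∉ {c_1,…,c_k}. Then v_{i-1} v_{i-2} … v_0 v_i v_{i+1} … v_j v_k v_{k-1} … v_{j+1} is a rainbow path of length k on vertex set {v_0,…,v_k} with terminal vertex v_{i-1}. -/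
open SimpleGraph

/-!
Cut `p = v_0 … v_k` into `v_0 … v_{i-1}`, `v_i … v_j` and `v_{j+1} … v_k`; the new walk
traverses the first and last pieces backwards and joins the three by the edges `v_0 v_i` and
`v_j v_k`. Its vertex list is a permutation of that of `p`, hence it is a path on the same
vertex set. Its color list is a permutation of that of `p` with the color of `v_{i-1} v_i`
replaced by the new color `c(v_k v_j)`, because `v_0 v_i` takes over the color of the dropped
edge `v_j v_{j+1}`; so it is again rainbow.
-/

namespace List

variable {α : Type*}

theorem reverse_append_append_reverse_perm (l₁ l₂ l₃ : List α) :
    (l₁.reverse ++ (l₂ ++ l₃.reverse)).Perm (l₁ ++ (l₂ ++ l₃)) :=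
  (reverse_perm l₁).append ((Perm.refl l₂).append (reverse_perm l₃))

theorem Nodup.reverse_append_cons_append_cons_reverse {l₁ l₂ l₃ : List α} {a b w : α}
    (h : (l₁ ++ a :: (l₂ ++ b :: l₃)).Nodup) (hw : w ∉ l₁ ++ a :: (l₂ ++ b :: l₃)) :
    (l₁.reverse ++ b :: (l₂ ++ w :: l₃.reverse)).Nodup := by
  classical
  have hperm : (l₁.reverse ++ b :: (l₂ ++ w :: l₃.reverse)).Perm
      (w :: (l₁ ++ (l₂ ++ b :: l₃))) :=
    perm_iff_count.2 fun x => by simp only [count_append, count_cons, count_reverse]; omega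
  refine hperm.nodup_iff.2 (nodup_cons.2 ⟨fun hmem => hw ?_, (nodup_middle.1 h).of_cons⟩)
  simp only [mem_append, mem_cons] at hmem ⊢
  tauto

theorem eq_take_append_getElem_cons_drop (l : List α) {n : ℕ} (h : n < l.length) :
    l = l.take n ++ l[n] :: l.drop (n + 1) := by
  rw [getElem_cons_drop, take_append_drop]

theorem drop_eq_take_append_drop (l : List α) {m n : ℕ} (h : m ≤ n) :
    l.drop m = (l.drop m).take (n - m) ++ l.drop n := by
  conv_lhs => rw [← take_append_drop (n - m) (l.drop m)]
  rw [drop_drop, Nat.add_sub_cancel' h]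

end List

namespace SimpleGraph.Walk

variable {V : Type*} {G : SimpleGraph V} {u v : V}

theorem support_eq_take_append_slice_append_drop (p : G.Walk u v) {i j : ℕ} (hi : 1 ≤ i)
    (hij : i ≤ j) (hj : j < p.length) :
    p.support = (p.take (i - 1)).support ++
      (((p.drop i).take (j - i)).support ++ (p.drop (j + 1)).support) := by
  rw [support_take, support_take, drop_support_eq_support_drop_min,
    drop_support_eq_support_drop_min, Nat.sub_add_cancel hi, min_eq_left (by omega),
    min_eq_left (by omega), show j - i + 1 = j + 1 - i by omega,
    ← p.support.drop_eq_take_append_drop (by omega), List.take_append_drop]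

theorem edges_eq_take_append_slice_append_drop (p : G.Walk u v) {i j : ℕ} (hi : 1 ≤ i)
    (hij : i ≤ j) (hj : j < p.length) :
    p.edges = (p.take (i - 1)).edges ++ s(p.getVert (i - 1), p.getVert i) ::
      (((p.drop i).take (j - i)).edges ++ s(p.getVert j, p.getVert (j + 1)) ::
        (p.drop (j + 1)).edges) := by
  have hsplit := p.edges.eq_take_append_getElem_cons_drop (n := i - 1) (by simp; omega)
  rw [getElem_edges, Nat.sub_add_cancel hi, p.edges.drop_eq_take_append_drop hij,
    List.drop_eq_getElem_cons (i := j) (by simp; omega), getElem_edges] at hsplit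
  rwa [edges_take, edges_take, edges_drop, edges_drop]

/-- The walk `v_{i-1} … v_0 v_i … v_j v_k … v_{j+1}`, where `p = v_0 … v_k`. -/
def reroute (p : G.Walk u v) {i j : ℕ} (hij : i ≤ j) (hu : G.Adj u (p.getVert i))
    (hv : G.Adj v (p.getVert j)) : G.Walk (p.getVert (i - 1)) (p.getVert (j + 1)) :=
  (p.take (i - 1)).reverse.append <| cons hu <|
    (((p.drop i).take (j - i)).copy rfl (by rw [drop_getVert, Nat.add_sub_cancel' hij])).append <|
      cons hv.symm (p.drop (j + 1)).reverse

section Reroute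

variable (p : G.Walk u v) {i j : ℕ} (hij : i ≤ j) (hu : G.Adj u (p.getVert i))
  (hv : G.Adj v (p.getVert j))

theorem support_reroute_perm (hi : 1 ≤ i) (hj : j < p.length) :
    (p.reroute hij hu hv).support.Perm p.support := by
  rw [p.support_eq_take_append_slice_append_drop hi hij hj]
  simpa [reroute, support_append] using List.reverse_append_append_reverse_perm
    (p.take (i - 1)).support ((p.drop i).take (j - i)).support (p.drop (j + 1)).support

theorem edges_reroute : (p.reroute hij hu hv).edges = (p.take (i - 1)).edges.reverse ++
    s(u, p.getVert i) :: (((p.drop i).take (j - i)).edges ++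
      s(p.getVert j, v) :: (p.drop (j + 1)).edges.reverse) := by
  simp [reroute, Sym2.eq_swap]

theorem length_reroute (hi : 1 ≤ i) (hj : j < p.length) :
    (p.reroute hij hu hv).length = p.length := by
  simpa using (p.support_reroute_perm hij hu hv hi hj).length_eq

theorem nodup_map_edges_reroute {α : Type*} {c : Sym2 V → α} (hi : 1 ≤ i) (hj : j < p.length)
    (hrb : (p.edges.map c).Nodup)
    (hcol : c s(u, p.getVert i) = c s(p.getVert j, p.getVert (j + 1)))
    (hnew : c s(p.getVert j, v) ∉ p.edges.map c) :
    ((p.reroute hij hu hv).edges.map c).Nodup := by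
  rw [p.edges_eq_take_append_slice_append_drop hi hij hj] at hrb hnew
  rw [edges_reroute]
  simp only [List.map_append, List.map_cons, List.map_reverse, hcol] at hrb hnew ⊢
  exact hrb.reverse_append_cons_append_cons_reverse hnew

end Reroute

theorem IsPath.reroute {p : G.Walk u v} (hp : p.IsPath) {i j : ℕ} (hij : i ≤ j)
    (hu : G.Adj u (p.getVert i)) (hv : G.Adj v (p.getVert j)) (hi : 1 ≤ i) (hj : j < p.length) :
    (p.reroute hij hu hv).IsPath :=
  (isPath_def _).2 ((p.support_reroute_perm hij hu hv hi hj).nodup_iff.2 hp.support_nodup)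

end SimpleGraph.Walk

theorem nice_edge_terminal_ge_general {V : Type*} [DecidableEq V]
    (G : SimpleGraph V) (c : Sym2 V → ℕ) (k : ℕ)
    (v₀ vₖ : V) (p : G.Walk v₀ vₖ) (hp : p.IsPath) (hlen : p.length = k)
    (hrb : (p.edges.map c).Nodup)
    (i j : ℕ) (hi : 1 ≤ i) (hij : i ≤ j) (hjk : j ≤ k - 2)
    (hadj : G.Adj v₀ (p.getVert i))
    (hcol : c s(v₀, p.getVert i) = c s(p.getVert j, p.getVert (j + 1)))
    (hadj' : G.Adj vₖ (p.getVert j))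
    (hnew : c s(vₖ, p.getVert j) ∉ p.edges.map c) :
    ∃ q : G.Walk (p.getVert (i - 1)) (p.getVert (j + 1)),
      q.IsPath ∧ q.length = k ∧ q.support.toFinset = p.support.toFinset ∧
      (q.edges.map c).Nodup := by
  have hj : j < p.length := by omega
  rw [Sym2.eq_swap] at hnew
  exact ⟨p.reroute hij hadj hadj', hp.reroute hij hadj hadj' hi hj,
    hlen ▸ p.length_reroute hij hadj hadj' hi hj,
    List.toFinset_eq_of_perm _ _ (p.support_reroute_perm hij hadj hadj' hi hj),
    p.nodup_map_edges_reroute hij hadj hadj' hi hj hrb hcol hnew⟩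

/-- Claim `nice_edges`, case `j ≥ i`. Let `p = v_0 … v_k` be
a rainbow path in a properly edge-colored graph. Suppose `v_0 v_i ∈ E(G)` with
`c(v_0 v_i) = c_j` for some `i ≤ j ≤ k-2`, and `v_k v_j ∈ E(G)` with
`c(v_k v_j)` not among the colors of `p`. Then
`v_{i-1} … v_0 v_i … v_j v_k v_{k-1} … v_{j+1}` is a rainbow path of
length `k` on the vertex set `{v_0,…,v_k}`, i.e. there is a rainbow path of
length `k` on that vertex set with terminal vertices `v_{i-1}` and `v_{j+1}`. -/
theorem nice_edge_terminal_ge {V : Type*} [DecidableEq V]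
    (G : SimpleGraph V) (c : Sym2 V → ℕ) (k : ℕ)
    (hproper : ProperEdgeColoring G c)
    (v₀ vₖ : V) (p : G.Walk v₀ vₖ) (hp : p.IsPath) (hlen : p.length = k)
    (hrb : (p.edges.map c).Nodup)
    (i j : ℕ) (hi : 1 ≤ i) (hij : i ≤ j) (hjk : j ≤ k - 2)
    (hadj : G.Adj v₀ (p.getVert i))
    (hcol : c s(v₀, p.getVert i) = c s(p.getVert j, p.getVert (j + 1)))
    (hadj' : G.Adj vₖ (p.getVert j))
    (hnew : c s(vₖ, p.getVert j) ∉ p.edges.map c) :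
    ∃ q : G.Walk (p.getVert (i - 1)) (p.getVert (j + 1)),
      q.IsPath ∧ q.length = k ∧ q.support.toFinset = p.support.toFinset ∧
      (q.edges.map c).Nodup :=
  nice_edge_terminal_ge_general G c k v₀ vₖ p hp hlen hrb i j hi hij hjk hadj hcol hadj' hnew
end

section
/- Let G be a graph on the vertex set of a matching with 2m vertices, and suppose for each matching edge a_i b_i we have d(a_i) + d(b_i) ≤ 3k − n_i/2, where n_i is the number of non-edges from {a_i,b_i} to the other matching vertices. If additionally the number of edges inside the matching's vertex set is at least 2m² − 2m − Σ n_i/2, then the number of edges of G incident to the matching's vertex set is at most (3k + 2 − 2m)m. -/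
open SimpleGraph Finset

lemma sum_deg_eq {V : Type*} [Fintype V] [DecidableEq V]
    (G : SimpleGraph V) [DecidableRel G.Adj] (T : Finset V) :
    ∑ v ∈ T, G.degree v =
      (G.edgeFinset.filter (fun e => ∃ x ∈ e, x ∈ T)).card +
      (G.edgeFinset.filter (fun e => ∀ x ∈ e, x ∈ T)).card := by
  have h1 : ∑ v ∈ T, G.degree v = ∑ e ∈ G.edgeFinset, (T.filter (· ∈ e)).card := by
    calc ∑ v ∈ T, G.degree v
        = ∑ v ∈ T, ∑ e ∈ G.edgeFinset, (if v ∈ e then 1 else 0) := by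
          refine Finset.sum_congr rfl fun v _ => ?_
          rw [← G.card_incidenceFinset_eq_degree, G.incidenceFinset_eq_filter,
            Finset.card_filter]
      _ = ∑ e ∈ G.edgeFinset, ∑ v ∈ T, (if v ∈ e then 1 else 0) := Finset.sum_comm
      _ = ∑ e ∈ G.edgeFinset, (T.filter (· ∈ e)).card :=
          Finset.sum_congr rfl fun e _ => (Finset.card_filter _ _).symm
  rw [h1, Finset.card_filter, Finset.card_filter, ← Finset.sum_add_distrib]
  refine Finset.sum_congr rfl fun e he => ?_
  rw [mem_edgeFinset] at he
  induction e using Sym2.ind with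
  | _ x y =>
    have hxy : x ≠ y := (G.ne_of_adj he)
    have : T.filter (· ∈ s(x,y)) = T ∩ {x, y} := by
      ext v; simp [Sym2.mem_iff, and_comm]
    rw [this]
    by_cases hx : x ∈ T <;> by_cases hy : y ∈ T <;>
      simp [Finset.inter_insert_of_mem, Finset.inter_insert_of_notMem,
        Finset.inter_singleton_of_mem, Finset.inter_singleton_of_notMem,
        hx, hy, hxy, Sym2.mem_iff] <;> omega

/-- Let `a_1 b_1, …, a_m b_m` be a matching in `G` with
vertex set `T` (`2m` distinct vertices), and for each `i` let `n_i` be the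
number of non-adjacent pairs between `{a_i, b_i}` and `T \ {a_i, b_i}`. If
`d(a_i) + d(b_i) ≤ 3k − n_i/2` for each `i`, and the number of edges of `G`
inside `T` is at least `2m² − 2m − Σ n_i/2`, then the number of edges of `G`
incident to `T` is at most `(3k + 2 − 2m)·m`. -/
theorem edges_incident_matching {V : Type*} [Fintype V] [DecidableEq V]
    (G : SimpleGraph V) [DecidableRel G.Adj]
    (m k : ℕ) (hm : 1 ≤ m) (a b : Fin m → V)
    (hab : ∀ i j : Fin m, a i ≠ b j)
    (ha : Function.Injective a) (hb : Function.Injective b)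
    (hedge : ∀ i : Fin m, G.Adj (a i) (b i))
    (T : Finset V) (hT : T = Finset.univ.image a ∪ Finset.univ.image b)
    (nn : Fin m → ℕ)
    (hnn : ∀ i : Fin m, nn i =
      ((({a i, b i} : Finset V) ×ˢ (T \ {a i, b i})).filter
        (fun q => ¬ G.Adj q.1 q.2)).card)
    (hdeg : ∀ i : Fin m,
      ((G.degree (a i) : ℝ) + G.degree (b i)) ≤ 3 * k - (nn i : ℝ) / 2)
    (hinside : (2 * m ^ 2 - 2 * m - (∑ i : Fin m, (nn i : ℝ)) / 2 : ℝ) ≤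
      ((G.edgeFinset.filter (fun e => ∀ x ∈ e, x ∈ T)).card : ℝ)) :
    ((G.edgeFinset.filter (fun e => ∃ x ∈ e, x ∈ T)).card : ℝ) ≤
      (3 * k + 2 - 2 * m) * m := by
  have hdisc : Disjoint (Finset.univ.image a) (Finset.univ.image b) := by
    rw [Finset.disjoint_left]
    rintro x hx hy
    simp only [Finset.mem_image, Finset.mem_univ, true_and] at hx hy
    obtain ⟨i, rfl⟩ := hx; obtain ⟨j, hj⟩ := hy
    exact hab i j hj.symm
  have hsum : ∑ v ∈ T, G.degree v = ∑ i : Fin m, (G.degree (a i) + G.degree (b i)) := by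
    rw [hT, Finset.sum_union hdisc,
      Finset.sum_image (fun i _ j _ h => ha h),
      Finset.sum_image (fun i _ j _ h => hb h), Finset.sum_add_distrib]
  have key := sum_deg_eq G T
  rw [hsum] at key
  have keyR : (∑ i : Fin m, ((G.degree (a i) : ℝ) + G.degree (b i))) =
      ((G.edgeFinset.filter (fun e => ∃ x ∈ e, x ∈ T)).card : ℝ) +
      ((G.edgeFinset.filter (fun e => ∀ x ∈ e, x ∈ T)).card : ℝ) := by
    exact_mod_cast congrArg (Nat.cast : ℕ → ℝ) key
  have hdegsum : (∑ i : Fin m, ((G.degree (a i) : ℝ) + G.degree (b i)))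
      ≤ 3 * k * m - (∑ i : Fin m, (nn i : ℝ)) / 2 := by
    calc (∑ i : Fin m, ((G.degree (a i) : ℝ) + G.degree (b i)))
        ≤ ∑ i : Fin m, (3 * (k : ℝ) - (nn i : ℝ) / 2) :=
          Finset.sum_le_sum fun i _ => hdeg i
      _ = 3 * k * m - (∑ i : Fin m, (nn i : ℝ)) / 2 := by
          rw [Finset.sum_sub_distrib, ← Finset.sum_div]
          simp [mul_comm]
  have hm' : (1 : ℝ) ≤ m := by exact_mod_cast hm
  have : (2 * (m:ℝ) ^ 2 - 2 * m - (∑ i : Fin m, (nn i : ℝ)) / 2 : ℝ) ≤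
      ((G.edgeFinset.filter (fun e => ∀ x ∈ e, x ∈ T)).card : ℝ) := by
    exact_mod_cast hinside
  nlinarith [this, keyR, hdegsum]
end

section
/- For k ≥ 2 and n a multiple of 2^{k+1}, there exists a graph on n vertices with n·2^{k-1} edges admitting a proper edge-coloring with no rainbow path of length 2^k; hence ex*(n, P_{2^k}) ≥ 2^{2k}·⌊n/2^{k+1}⌋. -/
/-!
Label each side of every copy of `K_{A,A}` by the `𝔽₂`-vector space `A` and colour the edge `uv`
by `u + v`. The colours telescope along a walk, so a walk from `x` to `y` has colour sum `x + y`.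
A rainbow path with `|A|` edges uses every colour once, so its colour sum is `∑ a : A, a`, which
vanishes when `|A| > 2`: additively `A` is the field `𝔽_{|A|}`, and the elements of a finite field
other than `𝔽₂` sum to zero. Hence the endpoints have the same label; as `|A|` is even they are
also on the same side of the same copy, so they coincide, which a path of positive length forbids.
-/

open SimpleGraph

def ProperEdgeColoring' {V β : Type*} (G : SimpleGraph V) (c : Sym2 V → β) : Prop :=
  ∀ ⦃u v w : V⦄, G.Adj u v → G.Adj u w → v ≠ w → c s(u, v) ≠ c s(u, w)

open Finset

theorem List.Nodup.sum_eq_sum_univ {α : Type*} [Fintype α] [AddCommMonoid α] {l : List α}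
    (hl : l.Nodup) (hlen : l.length = Fintype.card α) : l.sum = ∑ a : α, a := by
  classical
  have huniv : l.toFinset = univ :=
    eq_univ_of_card _ (by rw [List.toFinset_card_of_nodup hl, hlen])
  simpa [huniv] using (List.sum_toFinset id hl).symm

namespace ZModModule

variable {A : Type*} [AddCommGroup A] [Module (ZMod 2) A] [Fintype A]

theorem card_eq_two_pow_finrank : Fintype.card A = 2 ^ Module.finrank (ZMod 2) A := by
  rw [Module.card_eq_pow_finrank (K := ZMod 2), ZMod.card]

theorem finrank_ne_zero_of_two_lt_card (hA : 2 < Fintype.card A) :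
    Module.finrank (ZMod 2) A ≠ 0 := by
  intro h
  simp [card_eq_two_pow_finrank, h] at hA

theorem even_card_of_two_lt_card (hA : 2 < Fintype.card A) : Even (Fintype.card A) := by
  rw [card_eq_two_pow_finrank]
  exact (Nat.even_pow' (finrank_ne_zero_of_two_lt_card hA)).2 even_two

theorem sum_univ_eq_zero_of_two_lt_card (hA : 2 < Fintype.card A) : ∑ a : A, a = 0 := by
  set d := Module.finrank (ZMod 2) A
  let φ : A ≃ₗ[ZMod 2] GaloisField 2 d :=
    LinearEquiv.ofFinrankEq _ _ (GaloisField.finrank 2 (finrank_ne_zero_of_two_lt_card hA)).symm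
  let _ : Fintype (GaloisField 2 d) := Fintype.ofEquiv A φ.toEquiv
  apply φ.injective
  rw [map_sum, map_zero]
  refine (φ.toEquiv.sum_comp id).trans ?_
  simpa using FiniteField.sum_pow_lt_card_sub_one (GaloisField 2 d) 1
    (by rw [← Fintype.card_congr φ.toEquiv]; omega)

end ZModModule

namespace BicliqueUnion

variable {V α A : Type*} (e : V ≃ α × A × Bool)

/-- Through `e`, a vertex is a triple (copy, label, side): the graph is a disjoint union of
copies of `K_{A,A}` indexed by `α`. -/
def graph : SimpleGraph V where
  Adj u v := (e u).1 = (e v).1 ∧ (e u).2.2 ≠ (e v).2.2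
  symm := ⟨fun _ _ h => ⟨h.1.symm, h.2.symm⟩⟩
  loopless := ⟨fun _ h => h.2 rfl⟩

@[simp]
theorem graph_adj {u v : V} : (graph e).Adj u v ↔ (e u).1 = (e v).1 ∧ (e u).2.2 ≠ (e v).2.2 :=
  Iff.rfl

def sideColoring : (graph e).Coloring Bool :=
  Coloring.mk (fun v => (e v).2.2) fun h => h.2

section Degree

variable [Fintype V] [Fintype A]

theorem neighborFinset_graph [DecidableRel (graph e).Adj] (v : V) :
    (graph e).neighborFinset v =
      univ.map ⟨fun a => e.symm ((e v).1, a, !(e v).2.2), fun a b h => by simpa using h⟩ := by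
  ext w
  rw [mem_neighborFinset, mem_map]
  change _ ↔ ∃ a ∈ univ, e.symm ((e v).1, a, !(e v).2.2) = w
  simp [Equiv.symm_apply_eq, Prod.ext_iff, Bool.eq_not]

theorem degree_graph [DecidableRel (graph e).Adj] (v : V) :
    (graph e).degree v = Fintype.card A := by
  rw [← card_neighborFinset_eq_degree, neighborFinset_graph, card_map, card_univ]

theorem two_mul_ncard_edgeSet_graph :
    2 * (graph e).edgeSet.ncard = Fintype.card V * Fintype.card A := by
  classical
  rw [Set.ncard_eq_toFinset_card', ← edgeFinset, ← sum_degrees_eq_twice_card_edges]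
  simp [degree_graph]

end Degree

section Coloring

variable [AddCommGroup A]

def coloring : Sym2 V → A :=
  Sym2.lift ⟨fun u v => (e u).2.1 + (e v).2.1, fun _ _ => add_comm _ _⟩

@[simp]
theorem coloring_mk (u v : V) : coloring e s(u, v) = (e u).2.1 + (e v).2.1 := rfl

theorem properEdgeColoring'_coloring : ProperEdgeColoring' (graph e) (coloring e) := by
  intro u v w huv huw hvw hc
  have hside : (e v).2.2 = (e w).2.2 :=
    (Bool.eq_not.2 huv.2.symm).trans (Bool.eq_not.2 huw.2.symm).symm
  exact hvw (e.injective (Prod.ext (huv.1.symm.trans huw.1) (Prod.ext (by simpa using hc) hside)))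

end Coloring

variable {e}

theorem fst_eq_of_walk {x y : V} (p : (graph e).Walk x y) : (e x).1 = (e y).1 := by
  induction p with
  | nil => rfl
  | cons h _ ih => exact h.1.trans ih

theorem eq_of_walk_of_even_length {x y : V} (p : (graph e).Walk x y) (hlen : Even p.length)
    (hxy : (e x).2.1 = (e y).2.1) : x = y := by
  have hside : (e x).2.2 = (e y).2.2 :=
    Bool.eq_iff_iff.2 (((sideColoring e).even_length_iff_congr p).1 hlen)
  exact e.injective (Prod.ext (fst_eq_of_walk p) (Prod.ext hxy hside))

variable [AddCommGroup A] [Module (ZMod 2) A]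

theorem sum_map_coloring_edges {x y : V} (p : (graph e).Walk x y) :
    (p.edges.map (coloring e)).sum = (e x).2.1 + (e y).2.1 := by
  induction p with
  | nil => simp [ZModModule.add_self]
  | cons _ _ ih => simp [ih, ZModModule.add_add_add_cancel]

theorem not_nodup_map_coloring_of_isPath [Fintype A] (hA : 2 < Fintype.card A) {x y : V}
    (p : (graph e).Walk x y) (hp : p.IsPath) (hlen : p.length = Fintype.card A) :
    ¬ (p.edges.map (coloring e)).Nodup := by
  intro hnd
  have hsum : (e x).2.1 + (e y).2.1 = 0 := by
    rw [← sum_map_coloring_edges p, hnd.sum_eq_sum_univ (by simp [hlen]),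
      ZModModule.sum_univ_eq_zero_of_two_lt_card hA]
  obtain rfl : x = y := eq_of_walk_of_even_length p
    (hlen ▸ ZModModule.even_card_of_two_lt_card hA)
    (by rwa [← ZModModule.sub_eq_add, sub_eq_zero] at hsum)
  have := (SimpleGraph.Walk.isPath_iff_nil.1 hp).length_eq_zero
  omega

end BicliqueUnion

open BicliqueUnion

/-- For `k ≥ 2` and `n` divisible by `2^(k+1)`, there is a
graph on `n` vertices with `n·2^(k-1)` edges admitting a proper edge-coloring
with no rainbow path of length `2^k`; hence
`ex*(n, P_{2^k}) ≥ 2^(2k) · ⌊n / 2^(k+1)⌋`. -/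
theorem rainbow_turan_lower_bound (k n : ℕ) (hk : 2 ≤ k) (hn : 2 ^ (k + 1) ∣ n) :
    ∃ (G : SimpleGraph (Fin n)) (c : Sym2 (Fin n) → (Fin k → ZMod 2)),
      G.edgeSet.ncard = n * 2 ^ (k - 1) ∧
      ProperEdgeColoring' G c ∧
      (∀ (x y : Fin n) (p : G.Walk x y), p.IsPath → p.length = 2 ^ k →
        ¬ (p.edges.map c).Nodup) ∧
      2 ^ (2 * k) * (n / 2 ^ (k + 1)) ≤ G.edgeSet.ncard := by
  obtain ⟨m, rfl⟩ := hn
  have hA : Fintype.card (Fin k → ZMod 2) = 2 ^ k := by simp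
  let e : Fin (2 ^ (k + 1) * m) ≃ Fin m × (Fin k → ZMod 2) × Bool :=
    Fintype.equivOfCardEq (by simp [pow_succ]; ring)
  have hpow : 2 ^ k = 2 ^ (k - 1) * 2 := by rw [← pow_succ]; congr 1; omega
  have hedges : (graph e).edgeSet.ncard = 2 ^ (k + 1) * m * 2 ^ (k - 1) := by
    have := two_mul_ncard_edgeSet_graph e
    rw [Fintype.card_fin, hA, hpow] at this
    linarith
  refine ⟨graph e, coloring e, hedges, properEdgeColoring'_coloring e,
    fun x y p hp hlen => not_nodup_map_coloring_of_isPath ?_ p hp (hlen.trans hA.symm), ?_⟩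
  · rw [hA]
    calc 2 < 2 ^ 2 := by norm_num
      _ ≤ 2 ^ k := Nat.pow_le_pow_right two_pos hk
  · have h2k : 2 ^ (2 * k) = 2 ^ (k + 1) * 2 ^ (k - 1) := by rw [← pow_add]; congr 1; omega
    rw [hedges, Nat.mul_div_cancel_left _ (by positivity), h2k]
    exact (mul_right_comm _ _ _).le
end
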